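/- Let L ∈ T with root system R. Then for every α ∈ R, t_α lies in the core L_c, and moreover t_δ ∈ Z(L_c) for every isotropic δ ∈ R^0. -/
import Mathlib


open scoped Classical

namespace Gen

variable (F L : Type*) [Field F] [CharZero F] [LieRing L] [LieAlgebra F L]

/-- The weight space of a linear functional `α` on a subalgebra `H`. -/
def wt (H : LieSubalgebra F L) (α : Module.Dual F H) : Submodule F L where
  carrier := {x : L | ∀ h : H, ⁅(h : L), x⁆ = α h • x}
  add_mem' := by
    intro a b ha hb h
    rw [lie_add, ha h, hb h, smul_add]
  zero_mem' := by intro h; simp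
  smul_mem' := by
    intro c x hx h
    rw [lie_smul, hx h, smul_comm]

/-- Data for axioms (T1) and (T2): a non-degenerate symmetric invariant bilinear form,
a finite dimensional split toral subalgebra `H` on which the form is non-degenerate,
together with the representatives `t_α ∈ H` of linear functionals on `H`. -/
structure TData where
  B : L →ₗ[F] L →ₗ[F] F
  bsymm : ∀ x y, B x y = B y x
  binv : ∀ x y z, B ⁅x, y⁆ z = B x ⁅y, z⁆
  bnondeg : ∀ x, (∀ y, B x y = 0) → x = 0
  H : LieSubalgebra F L
  hne : H ≠ ⊥
  hfin : FiniteDimensional F H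
  hnondeg : ∀ h : H, (∀ h' : H, B h h' = 0) → h = 0
  decomp : DirectSum.IsInternal (wt F L H)
  t : Module.Dual F H → H
  tspec : ∀ (α : Module.Dual F H) (h : H), B (t α) h = α h

variable {F L}

namespace TData

variable (T : TData F L)

/-- The form transferred to the dual of `H`: `(α, β) = (t_α, t_β)`. -/
def pr (α β : Module.Dual F T.H) : F := T.B (T.t α) (T.t β)

/-- The root system `R = {α : L_α ≠ 0}`. -/
def R : Set (Module.Dual F T.H) := {α | wt F L T.H α ≠ ⊥}

/-- Non-isotropic roots. -/
def Rx : Set (Module.Dual F T.H) := {α | α ∈ T.R ∧ T.pr α α ≠ 0}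

/-- Isotropic roots. -/
def R0 : Set (Module.Dual F T.H) := {α | α ∈ T.R ∧ T.pr α α = 0}

/-- The core: the subalgebra generated by the non-isotropic root spaces. -/
def core : LieSubalgebra F L :=
  LieSubalgebra.lieSpan F L (⋃ α ∈ T.Rx, (wt F L T.H α : Set L))

end TData

variable (F L)

/-- A Lie algebra in the class 𝒯: axioms (T1)–(T6). -/
structure TAlg extends TData F L where
  t3a : ∀ δ ∈ toTData.R0, ∃ x ∈ wt F L toTData.H δ, ∃ y ∈ wt F L toTData.H (-δ),
          ⁅x, y⁆ = (toTData.t δ : L)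
  t3b : ∀ α ∈ toTData.Rx, ∀ x ∈ wt F L toTData.H α, x ≠ 0 →
          ∃ y ∈ wt F L toTData.H (-α), ⁅x, y⁆ = (toTData.t α : L)
  t4 : ∀ α ∈ toTData.Rx, ∀ x ∈ wt F L toTData.H α, ∀ y : L,
          ∃ n : ℕ, ((LieAlgebra.ad F L x) ^ n) y = 0
  t5a : ∀ S1 S2 : Set (Module.Dual F toTData.H), S1.Nonempty → S2.Nonempty →
          S1 ∪ S2 = toTData.Rx → Disjoint S1 S2 →
          ∃ a ∈ S1, ∃ b ∈ S2, toTData.pr a b ≠ 0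
  t5b : ∀ δ ∈ toTData.R0, ∃ α ∈ toTData.Rx, α + δ ∈ toTData.R
  t6free : Module.Free ℤ (AddSubgroup.closure toTData.R0)
  t6fin : Module.Finite ℤ (AddSubgroup.closure toTData.R0)

end Gen

section Aux

open Gen

variable {F L : Type*} [Field F] [CharZero F] [LieRing L] [LieAlgebra F L]

omit [CharZero F] in
lemma wt_apply {H : LieSubalgebra F L} {b : Module.Dual F H} {v : L}
    (hv : v ∈ wt F L H b) (h : H) : ⁅(h : L), v⁆ = b h • v := hv h

omit [CharZero F] in
lemma wt_lie {H : LieSubalgebra F L} {a b : Module.Dual F H} {x v : L}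
    (hx : x ∈ wt F L H a) (hv : v ∈ wt F L H b) : ⁅x, v⁆ ∈ wt F L H (a + b) := by
  intro h
  have h1 : ⁅(h : L), ⁅x, v⁆⁆ = ⁅⁅(h : L), x⁆, v⁆ + ⁅x, ⁅(h : L), v⁆⁆ := leibniz_lie _ _ _
  rw [hx h, hv h] at h1
  rw [h1]
  simp [smul_lie, lie_smul, add_smul]

omit [CharZero F] in
lemma wt_ad_pow {H : LieSubalgebra F L} {a b : Module.Dual F H} {x v : L}
    (hx : x ∈ wt F L H a) (hv : v ∈ wt F L H b) (j : ℕ) :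
    ((LieAlgebra.ad F L x) ^ j) v ∈ wt F L H (b + (j : F) • a) := by
  induction j with
  | zero => simpa using hv
  | succ n ih =>
    have h1 : ((LieAlgebra.ad F L x) ^ (n + 1)) v = ⁅x, ((LieAlgebra.ad F L x) ^ n) v⁆ := by
      rw [pow_succ']; rfl
    have h2 := wt_lie hx ih
    have heq : a + (b + (n : F) • a) = b + ((n + 1 : ℕ) : F) • a := by
      push_cast
      rw [add_smul, one_smul]
      abel
    rw [h1, ← heq]
    exact h2

omit [CharZero F] in
/-- key sl2-type identity -/
lemma ad_pow_bracket {x y hh v : L} (hxy : ⁅x, y⁆ = hh) (hv : ⁅x, v⁆ = 0)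
    (s C : ℕ → F) (hC0 : C 0 = 0) (hCs : ∀ j, C (j + 1) = C j + s j)
    (hs : ∀ j, ⁅hh, ((LieAlgebra.ad F L y) ^ j) v⁆ = s j • ((LieAlgebra.ad F L y) ^ j) v) :
    ∀ j, ⁅x, ((LieAlgebra.ad F L y) ^ (j + 1)) v⁆ = C (j + 1) • ((LieAlgebra.ad F L y) ^ j) v := by
  have hstep : ∀ j, ((LieAlgebra.ad F L y) ^ (j + 1)) v = ⁅y, ((LieAlgebra.ad F L y) ^ j) v⁆ := by
    intro j; rw [pow_succ']; rfl
  intro j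
  induction j with
  | zero =>
    have h0 := hs 0
    simp only [pow_zero, Module.End.one_apply] at h0 ⊢
    rw [hstep 0, leibniz_lie, hxy]
    simp only [pow_zero, Module.End.one_apply, hv, lie_zero, add_zero]
    rw [h0, hCs 0, hC0, zero_add]
  | succ n ih =>
    rw [hstep (n + 1), leibniz_lie, hxy, ih, hs (n + 1), lie_smul, hstep n, hCs (n + 1),
      add_smul, add_comm]

namespace Gen.TData

variable (T : Gen.TData F L)

omit [CharZero F] in
lemma t_unique {a : Module.Dual F T.H} {h : T.H} (hh : ∀ h' : T.H, T.B h h' = a h') :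
    T.t a = h := by
  have key : T.t a - h = 0 := by
    apply T.hnondeg
    intro h'
    have h1 := T.tspec a h'
    have h2 := hh h'
    have hc : ((T.t a - h : T.H) : L) = (T.t a : L) - (h : L) := rfl
    rw [hc, map_sub, LinearMap.sub_apply, h1, h2, sub_self]
  rw [← sub_eq_zero]
  exact key

omit [CharZero F] in
lemma t_add (a b : Module.Dual F T.H) : T.t (a + b) = T.t a + T.t b := by
  apply t_unique
  intro h'
  have hc : ((T.t a + T.t b : T.H) : L) = (T.t a : L) + (T.t b : L) := rfl
  rw [hc, map_add, LinearMap.add_apply, T.tspec a h', T.tspec b h', LinearMap.add_apply]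

omit [CharZero F] in
lemma t_smul (r : F) (a : Module.Dual F T.H) : T.t (r • a) = r • T.t a := by
  apply t_unique
  intro h'
  have hc : ((r • T.t a : T.H) : L) = r • (T.t a : L) := rfl
  rw [hc, map_smul, LinearMap.smul_apply, T.tspec a h', LinearMap.smul_apply]

omit [CharZero F] in
lemma t_neg (a : Module.Dual F T.H) : T.t (-a) = -T.t a := by
  apply t_unique
  intro h'
  have hc : ((-T.t a : T.H) : L) = -(T.t a : L) := rfl
  rw [hc, map_neg, LinearMap.neg_apply, T.tspec a h', LinearMap.neg_apply]

omit [CharZero F] in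
lemma pr_symm (a b : Module.Dual F T.H) : T.pr a b = T.pr b a := T.bsymm _ _

omit [CharZero F] in
lemma pr_eval (a b : Module.Dual F T.H) : T.pr a b = a (T.t b) := T.tspec a (T.t b)

omit [CharZero F] in
lemma pr_add_left (a b c : Module.Dual F T.H) : T.pr (a + b) c = T.pr a c + T.pr b c := by
  rw [pr_eval, pr_eval, pr_eval, LinearMap.add_apply]

omit [CharZero F] in
lemma pr_add_right (a b c : Module.Dual F T.H) : T.pr a (b + c) = T.pr a b + T.pr a c := by
  rw [pr_symm, pr_add_left, T.pr_symm b a, T.pr_symm c a]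

omit [CharZero F] in
lemma pr_smul_left (r : F) (a c : Module.Dual F T.H) : T.pr (r • a) c = r * T.pr a c := by
  rw [pr_eval, pr_eval, LinearMap.smul_apply, smul_eq_mul]

omit [CharZero F] in
lemma pr_smul_right (r : F) (a c : Module.Dual F T.H) : T.pr a (r • c) = r * T.pr a c := by
  rw [pr_symm, pr_smul_left, T.pr_symm c a]

omit [CharZero F] in
lemma pr_neg_neg (a b : Module.Dual F T.H) : T.pr (-a) (-b) = T.pr a b := by
  unfold Gen.TData.pr
  rw [t_neg, t_neg]
  have hc : ∀ z : T.H, ((-z : T.H) : L) = -(z : L) := fun z => rfl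
  rw [hc, hc, map_neg, map_neg, LinearMap.neg_apply, neg_neg]

end Gen.TData


section Main

variable (T : Gen.TAlg F L)

lemma exists_sl2 {β : Module.Dual F T.toTData.H} (hβ : β ∈ T.toTData.Rx) :
    ∃ e f : L, e ∈ wt F L T.toTData.H β ∧ e ≠ 0 ∧ f ∈ wt F L T.toTData.H (-β) ∧ f ≠ 0 ∧
      ⁅e, f⁆ = (T.toTData.t β : L) := by
  obtain ⟨hR, hbb⟩ := hβ
  obtain ⟨e, he, hene⟩ := Submodule.ne_bot_iff _ |>.mp hR
  obtain ⟨f, hf, hef⟩ := T.t3b β ⟨hR, hbb⟩ e he hene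
  have hfne : f ≠ 0 := by
    rintro rfl
    apply hbb
    have h0 : (T.toTData.t β : L) = 0 := by rw [← hef, lie_zero]
    unfold Gen.TData.pr
    rw [h0]
    simp
  exact ⟨e, f, he, hene, hf, hfne, hef⟩

lemma neg_mem_Rx {β : Module.Dual F T.toTData.H} (hβ : β ∈ T.toTData.Rx) :
    -β ∈ T.toTData.Rx := by
  obtain ⟨e, f, he, hene, hf, hfne, hef⟩ := exists_sl2 T hβ
  refine ⟨?_, ?_⟩
  · exact Submodule.ne_bot_iff _ |>.mpr ⟨f, hf, hfne⟩
  · rw [T.toTData.pr_neg_neg]; exact hβ.2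

lemma integrality {β γ : Module.Dual F T.toTData.H}
    (hβ : β ∈ T.toTData.Rx) (hγ : γ ∈ T.toTData.R) :
    ∃ z : ℤ, 2 * T.toTData.pr γ β = (z : F) * T.toTData.pr β β := by
  obtain ⟨e, f, he, hene, hf, hfne, hef⟩ := exists_sl2 T hβ
  have hbb : T.toTData.pr β β ≠ 0 := hβ.2
  have hnegβ : -β ∈ T.toTData.Rx := neg_mem_Rx T hβ
  obtain ⟨v₀, hv₀, hv₀ne⟩ := Submodule.ne_bot_iff _ |>.mp hγ
  set E := LieAlgebra.ad F L e with hE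
  have hnil : ∃ n, (E ^ n) v₀ = 0 := T.t4 β hβ e he v₀
  set n₀ := Nat.find hnil with hn₀
  have hn₀spec : (E ^ n₀) v₀ = 0 := Nat.find_spec hnil
  have hn₀pos : 1 ≤ n₀ := by
    by_contra h
    have h0 : n₀ = 0 := by omega
    apply hv₀ne
    have := hn₀spec
    rw [h0] at this
    simpa using this
  set q := n₀ - 1 with hq
  set v := (E ^ q) v₀ with hv
  have hvne : v ≠ 0 := Nat.find_min hnil (by omega)
  have hv_wt : v ∈ wt F L T.toTData.H (γ + (q : F) • β) := wt_ad_pow he hv₀ q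
  have hev : ⁅e, v⁆ = 0 := by
    have h1 : (E ^ (q + 1)) v₀ = ⁅e, (E ^ q) v₀⁆ := by rw [pow_succ']; rfl
    have h2 : q + 1 = n₀ := by omega
    rw [← hv] at h1
    rw [← h1, h2, hn₀spec]
  set Y := LieAlgebra.ad F L f with hY
  have hnilf : ∃ n, (Y ^ n) v = 0 := T.t4 (-β) hnegβ f hf v
  set m := Nat.find hnilf with hm
  have hmspec : (Y ^ m) v = 0 := Nat.find_spec hnilf
  have hmpos : 1 ≤ m := by
    by_contra h
    have h0 : m = 0 := by omega
    apply hvne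
    have := hmspec
    rw [h0] at this
    simpa using this
  set b := T.toTData.pr β β with hb
  set p := T.toTData.pr γ β + (q : F) * b with hp
  have hβtβ : β (T.toTData.t β) = b := (T.toTData.pr_eval β β).symm
  have hγtβ : γ (T.toTData.t β) = T.toTData.pr γ β := (T.toTData.pr_eval γ β).symm
  have hs : ∀ j : ℕ, ⁅(T.toTData.t β : L), (Y ^ j) v⁆ = (p - (j : F) * b) • ((Y ^ j) v) := by
    intro j
    have hw := wt_ad_pow hf hv_wt j
    rw [wt_apply hw (T.toTData.t β)]
    congr 1
    simp only [LinearMap.add_apply, LinearMap.smul_apply, LinearMap.neg_apply, smul_eq_mul]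
    rw [hβtβ, hγtβ, hp]
    ring
  set C : ℕ → F := fun j => (j : F) * T.toTData.pr γ β +
    ((j : F) * (q : F) - (j : F) * ((j : F) - 1) / 2) * b with hC
  have hC0 : C 0 = 0 := by simp [hC]
  have hCs : ∀ j, C (j + 1) = C j + (p - (j : F) * b) := by
    intro j
    rw [hC, hp]
    push_cast
    ring
  have hkey := ad_pow_bracket hef hev _ C hC0 hCs hs
  obtain ⟨mm, hmm⟩ : ∃ mm, m = mm + 1 := ⟨m - 1, by omega⟩
  have hYmm : (Y ^ mm) v ≠ 0 := Nat.find_min hnilf (by omega)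
  have hCm : C m = 0 := by
    have h1 := hkey mm
    rw [← hmm, hmspec, lie_zero] at h1
    rcases smul_eq_zero.mp h1.symm with h | h
    · exact h
    · exact absurd h hYmm
  refine ⟨(m : ℤ) - 1 - 2 * (q : ℤ), ?_⟩
  have hm0 : (m : F) ≠ 0 := Nat.cast_ne_zero.mpr (by omega)
  have hfac : (m : F) * (2 * T.toTData.pr γ β - (((m : ℤ) - 1 - 2 * (q : ℤ) : ℤ) : F) * b) = 0 := by
    rw [hC] at hCm
    push_cast
    linear_combination 2 * hCm
  rcases mul_eq_zero.mp hfac with h | h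
  · exact absurd h hm0
  · linear_combination h

lemma ortho {α δ : Module.Dual F T.toTData.H}
    (hα : α ∈ T.toTData.Rx) (hδ : δ ∈ T.toTData.R0) : T.toTData.pr α δ = 0 := by
  by_contra hc
  have ha : T.toTData.pr α α ≠ 0 := hα.2
  have hδδ : T.toTData.pr δ δ = 0 := hδ.2
  have hδα : T.toTData.pr δ α = T.toTData.pr α δ := T.toTData.pr_symm δ α
  obtain ⟨u₀, hu₀⟩ := integrality T hα hδ.1
  rw [hδα] at hu₀
  -- hu₀ : 2 * pr α δ = u₀ * pr α α
  have hu₀ne : u₀ ≠ 0 := by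
    intro h
    rw [h] at hu₀
    simp at hu₀
    exact hc hu₀
  have habs : 1 ≤ |u₀| := Int.one_le_abs hu₀ne
  -- the boundedness claim
  have hbound : ∀ n : ℤ, 3 ≤ |n| → wt F L T.toTData.H (α + (n : F) • δ) = ⊥ := by
    intro n hn
    by_contra hR
    have hβR : (α + (n : F) • δ) ∈ T.toTData.R := hR
    have hnorm : T.toTData.pr (α + (n : F) • δ) (α + (n : F) • δ) =
        T.toTData.pr α α + (n : F) * (2 * T.toTData.pr α δ) := by
      rw [T.toTData.pr_add_left, T.toTData.pr_add_right, T.toTData.pr_add_right,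
        T.toTData.pr_smul_left, T.toTData.pr_smul_left, T.toTData.pr_smul_right,
        T.toTData.pr_smul_right, hδδ, hδα]
      ring
    have hδβ : T.toTData.pr δ (α + (n : F) • δ) = T.toTData.pr α δ := by
      rw [T.toTData.pr_add_right, T.toTData.pr_smul_right, hδδ, hδα]
      ring
    rcases eq_or_ne (T.toTData.pr α α + (n : F) * (2 * T.toTData.pr α δ)) 0 with hz | hnz
    · -- isotropic case : 1 + n * u₀ = 0, impossible for |n| ≥ 3
      have hFeq : ((1 + n * u₀ : ℤ) : F) * (2 * T.toTData.pr α δ) = 0 := by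
        push_cast
        linear_combination hu₀ + (u₀ : F) * hz
      have hint : (1 + n * u₀ : ℤ) = 0 := by
        have h2 : (2 : F) * T.toTData.pr α δ ≠ 0 := mul_ne_zero two_ne_zero hc
        have := mul_eq_zero.mp hFeq
        rcases this with h | h
        · exact_mod_cast h
        · exact absurd h h2
      have : |n * u₀| = 1 := by
        have : n * u₀ = -1 := by omega
        rw [this]
        norm_num
      rw [abs_mul] at this
      nlinarith [habs, hn]
    · -- non-isotropic case
      have hβx : (α + (n : F) • δ) ∈ T.toTData.Rx := ⟨hβR, by rw [hnorm]; exact hnz⟩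
      obtain ⟨z, hzeq⟩ := integrality T hβx hδ.1
      rw [hδβ, hnorm] at hzeq
      -- hzeq : 2 * pr α δ = z * (pr α α + n * (2 * pr α δ))
      have hzne : z ≠ 0 := by
        intro h
        rw [h] at hzeq
        simp at hzeq
        exact hc hzeq
      have hFeq : ((u₀ - z * (1 + n * u₀) : ℤ) : F) * (2 * T.toTData.pr α δ) = 0 := by
        push_cast
        linear_combination (-(z : F)) * hu₀ + (u₀ : F) * hzeq
      have hint : u₀ = z * (1 + n * u₀) := by
        have h2 : (2 : F) * T.toTData.pr α δ ≠ 0 := mul_ne_zero two_ne_zero hc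
        rcases mul_eq_zero.mp hFeq with h | h
        · have : (u₀ - z * (1 + n * u₀) : ℤ) = 0 := by exact_mod_cast h
          omega
        · exact absurd h h2
      have h1ne : (1 + n * u₀) ≠ 0 := by
        intro h
        rw [h, mul_zero] at hint
        exact hu₀ne hint
      have hdvd : (1 + n * u₀) ∣ u₀ := ⟨z, by linear_combination hint⟩
      have hle : |1 + n * u₀| ≤ |u₀| :=
        Int.le_of_dvd (abs_pos.mpr hu₀ne) ((abs_dvd _ _).mpr ((dvd_abs _ _).mpr hdvd))
      have htri : |n * u₀| ≤ |1 + n * u₀| + 1 := by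
        have h1 : n * u₀ = (1 + n * u₀) + (-1) := by ring
        calc |n * u₀| = |(1 + n * u₀) + (-1)| := by rw [← h1]
          _ ≤ |1 + n * u₀| + |(-1 : ℤ)| := abs_add_le _ _
          _ = |1 + n * u₀| + 1 := by norm_num
      rw [abs_mul] at htri
      nlinarith [habs, hn, hle]
  -- Heisenberg argument
  obtain ⟨x, hx, y, hy, hxy⟩ := T.t3a δ hδ
  obtain ⟨v₀, hv₀, hv₀ne⟩ := Submodule.ne_bot_iff _ |>.mp hα.1
  set X := LieAlgebra.ad F L x with hX
  have hX3 : (X ^ 3) v₀ = 0 := by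
    have hw := wt_ad_pow hx hv₀ 3
    rw [show (((3 : ℕ) : F)) = (((3 : ℤ) : F)) by norm_num] at hw
    rw [hbound 3 (by norm_num)] at hw
    simpa using hw
  have hnil : ∃ n, (X ^ n) v₀ = 0 := ⟨3, hX3⟩
  set n₀ := Nat.find hnil with hn₀
  have hn₀spec : (X ^ n₀) v₀ = 0 := Nat.find_spec hnil
  have hn₀pos : 1 ≤ n₀ := by
    by_contra h
    have h0 : n₀ = 0 := by omega
    apply hv₀ne
    have := hn₀spec
    rw [h0] at this
    simpa using this
  set q := n₀ - 1 with hq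
  set v := (X ^ q) v₀ with hv
  have hvne : v ≠ 0 := Nat.find_min hnil (by omega)
  have hv_wt : v ∈ wt F L T.toTData.H (α + (q : F) • δ) := wt_ad_pow hx hv₀ q
  have hxv : ⁅x, v⁆ = 0 := by
    have h1 : (X ^ (q + 1)) v₀ = ⁅x, (X ^ q) v₀⁆ := by rw [pow_succ']; rfl
    have h2 : q + 1 = n₀ := by omega
    rw [← hv] at h1
    rw [← h1, h2, hn₀spec]
  set Y := LieAlgebra.ad F L y with hY
  have hY0 : (Y ^ (q + 3)) v = 0 := by
    have hw := wt_ad_pow hy hv_wt (q + 3)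
    have heq : (α + (q : F) • δ) + (((q + 3 : ℕ)) : F) • (-δ) = α + (((-3 : ℤ)) : F) • δ := by
      have h3 : (((q + 3 : ℕ)) : F) = (q : F) + 3 := by push_cast; ring
      rw [h3]
      module
    rw [heq] at hw
    rw [hbound (-3) (by norm_num)] at hw
    simpa using hw
  have hnilY : ∃ n, (Y ^ n) v = 0 := ⟨q + 3, hY0⟩
  set m := Nat.find hnilY with hm
  have hmspec : (Y ^ m) v = 0 := Nat.find_spec hnilY
  have hmpos : 1 ≤ m := by
    by_contra h
    have h0 : m = 0 := by omega
    apply hvne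
    have := hmspec
    rw [h0] at this
    simpa using this
  have hαtδ : α (T.toTData.t δ) = T.toTData.pr α δ := (T.toTData.pr_eval α δ).symm
  have hδtδ : δ (T.toTData.t δ) = 0 := by
    rw [← T.toTData.pr_eval δ δ]
    exact hδδ
  have hs : ∀ j : ℕ, ⁅(T.toTData.t δ : L), (Y ^ j) v⁆ = T.toTData.pr α δ • ((Y ^ j) v) := by
    intro j
    have hw := wt_ad_pow hy hv_wt j
    rw [wt_apply hw (T.toTData.t δ)]
    congr 1
    simp only [LinearMap.add_apply, LinearMap.smul_apply, LinearMap.neg_apply, smul_eq_mul]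
    rw [hαtδ, hδtδ]
    ring
  set C : ℕ → F := fun j => (j : F) * T.toTData.pr α δ with hC
  have hC0 : C 0 = 0 := by simp [hC]
  have hCs : ∀ j : ℕ, C (j + 1) = C j + T.toTData.pr α δ := by
    intro j
    rw [hC]
    push_cast
    ring
  have hkey := ad_pow_bracket hxy hxv (fun _ => T.toTData.pr α δ) C hC0 hCs hs
  obtain ⟨mm, hmm⟩ : ∃ mm, m = mm + 1 := ⟨m - 1, by omega⟩
  have hYmm : (Y ^ mm) v ≠ 0 := Nat.find_min hnilY (by omega)
  have hCm : C m = 0 := by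
    have h1 := hkey mm
    rw [← hmm, hmspec, lie_zero] at h1
    rcases smul_eq_zero.mp h1.symm with h | h
    · exact h
    · exact absurd h hYmm
  rw [hC] at hCm
  have hm0 : (m : F) ≠ 0 := Nat.cast_ne_zero.mpr (by omega)
  rcases mul_eq_zero.mp hCm with h | h
  · exact hm0 h
  · exact hc h


lemma t_mem_core_of_Rx {α : Module.Dual F T.toTData.H} (hα : α ∈ T.toTData.Rx) :
    (T.toTData.t α : L) ∈ T.toTData.core := by
  obtain ⟨e, f, he, hene, hf, hfne, hef⟩ := exists_sl2 T hα
  have hnα : -α ∈ T.toTData.Rx := neg_mem_Rx T hα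
  have heC : e ∈ T.toTData.core :=
    LieSubalgebra.subset_lieSpan (Set.mem_biUnion hα he)
  have hfC : f ∈ T.toTData.core :=
    LieSubalgebra.subset_lieSpan (Set.mem_biUnion hnα hf)
  rw [← hef]
  exact T.toTData.core.lie_mem heC hfC


end Main

end Aux

/-- For `L ∈ 𝒯`, `t_α` lies in the core for every root `α`, and `t_δ` is
central in the core for every isotropic root `δ`. -/
theorem t_mem_core_and_central
    (F L : Type*) [Field F] [CharZero F] [LieRing L] [LieAlgebra F L]
    (T : Gen.TAlg F L) :
    (∀ α ∈ T.toTData.R, (T.toTData.t α : L) ∈ T.toTData.core) ∧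
    (∀ δ ∈ T.toTData.R0, ∀ x ∈ T.toTData.core, ⁅(T.toTData.t δ : L), x⁆ = 0) := by
  have part1 : ∀ α ∈ T.toTData.R, (T.toTData.t α : L) ∈ T.toTData.core := by
    intro α hαR
    rcases eq_or_ne (T.toTData.pr α α) 0 with h0 | hne
    · have hδ : α ∈ T.toTData.R0 := ⟨hαR, h0⟩
      obtain ⟨β, hβ, hβα⟩ := T.t5b α hδ
      have ho : T.toTData.pr β α = 0 := ortho T hβ hδ
      have hsum : (β + α) ∈ T.toTData.Rx := by
        refine ⟨hβα, ?_⟩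
        rw [T.toTData.pr_add_left, T.toTData.pr_add_right, T.toTData.pr_add_right,
          ho, T.toTData.pr_symm α β, ho, h0]
        simpa using hβ.2
      have h2 : T.toTData.t (β + α) = T.toTData.t β + T.toTData.t α :=
        T.toTData.t_add β α
      have h3 : (T.toTData.t α : L) = (T.toTData.t (β + α) : L) - (T.toTData.t β : L) := by
        rw [h2]
        have hcoe : ((T.toTData.t β + T.toTData.t α : T.toTData.H) : L) =
            (T.toTData.t β : L) + (T.toTData.t α : L) := rfl
        rw [hcoe]
        abel
      rw [h3]
      exact sub_mem (t_mem_core_of_Rx T hsum) (t_mem_core_of_Rx T hβ)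
    · exact t_mem_core_of_Rx T ⟨hαR, hne⟩
  refine ⟨part1, ?_⟩
  intro δ hδ x hx
  let C : LieSubalgebra F L :=
    { carrier := {z : L | ⁅(T.toTData.t δ : L), z⁆ = 0}
      add_mem' := by
        intro a b ha hb
        simp only [Set.mem_setOf_eq] at ha hb ⊢
        rw [lie_add, ha, hb, add_zero]
      zero_mem' := by simp
      smul_mem' := by
        intro r z hz
        simp only [Set.mem_setOf_eq] at hz ⊢
        rw [lie_smul, hz, smul_zero]
      lie_mem' := by
        intro a b ha hb
        simp only [Set.mem_setOf_eq] at ha hb ⊢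
        rw [leibniz_lie, ha, hb, zero_lie, lie_zero, add_zero] }
  have hle : T.toTData.core ≤ C := by
    apply LieSubalgebra.lieSpan_le.mpr
    intro z hz
    obtain ⟨β, hβ, hzβ⟩ := Set.mem_iUnion₂.mp hz
    show ⁅(T.toTData.t δ : L), z⁆ = 0
    rw [wt_apply hzβ (T.toTData.t δ)]
    have hval : β (T.toTData.t δ) = T.toTData.pr β δ := (T.toTData.pr_eval β δ).symm
    rw [hval, ortho T hβ hδ, zero_smul]
  exact hle hx
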